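/- Let α, β : ℝ³ → ℂ be smooth and nowhere zero with polar decompositions α = r_α e^{iθ_α}, β = r_β e^{iθ_β}, and set E := Re{∇α×∇β}, B := Im{∇α×∇β}. If ∇θ_α × ∇θ_β = 0 everywhere, then E·∇(Re{αβ}) = 0 and B·∇(Im{αβ}) = 0 everywhere. -/

import Mathlib

noncomputable section

abbrev V3 := Fin 3 → ℝ
abbrev C3 := Fin 3 → ℂ
abbrev P4 := ℝ × V3

def e3 (i : Fin 3) : V3 := Pi.single i 1

def dot3 (a b : V3) : ℝ := a 0 * b 0 + a 1 * b 1 + a 2 * b 2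

def cross3 (a b : V3) : V3 :=
  ![a 1 * b 2 - a 2 * b 1, a 2 * b 0 - a 0 * b 2, a 0 * b 1 - a 1 * b 0]

def pd (i : Fin 3) (f : V3 → ℝ) (x : V3) : ℝ := fderiv ℝ f x (e3 i)

def grad3 (f : V3 → ℝ) (x : V3) : V3 := fun i => pd i f x

def div3 (F : V3 → V3) (x : V3) : ℝ :=
  pd 0 (fun y => F y 0) x + pd 1 (fun y => F y 1) x + pd 2 (fun y => F y 2) x

def curl3 (F : V3 → V3) (x : V3) : V3 :=
  ![pd 1 (fun y => F y 2) x - pd 2 (fun y => F y 1) x,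
    pd 2 (fun y => F y 0) x - pd 0 (fun y => F y 2) x,
    pd 0 (fun y => F y 1) x - pd 1 (fun y => F y 0) x]

/-- (X·∇)Y at a point: components Σ_j X_j ∂_j Y_i. -/
def dirDeriv (X : V3) (Y : V3 → V3) (x : V3) : V3 :=
  fun i => dot3 X (grad3 (fun y => Y y i) x)

def cdot3 (a b : C3) : ℂ := a 0 * b 0 + a 1 * b 1 + a 2 * b 2

def ccross3 (a b : C3) : C3 :=
  ![a 1 * b 2 - a 2 * b 1, a 2 * b 0 - a 0 * b 2, a 0 * b 1 - a 1 * b 0]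

def pdC (i : Fin 3) (f : V3 → ℂ) (x : V3) : ℂ := fderiv ℝ f x (e3 i)

def gradC (f : V3 → ℂ) (x : V3) : C3 := fun i => pdC i f x

def divC (F : V3 → C3) (x : V3) : ℂ :=
  pdC 0 (fun y => F y 0) x + pdC 1 (fun y => F y 1) x + pdC 2 (fun y => F y 2) x

def curlC (F : V3 → C3) (x : V3) : C3 :=
  ![pdC 1 (fun y => F y 2) x - pdC 2 (fun y => F y 1) x,
    pdC 2 (fun y => F y 0) x - pdC 0 (fun y => F y 2) x,
    pdC 0 (fun y => F y 1) x - pdC 1 (fun y => F y 0) x]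

/-- time derivative of a scalar on ℝ × ℝ³ -/
def pdt (f : P4 → ℝ) (p : P4) : ℝ := fderiv ℝ f p (1, 0)

/-- time derivative of a vector field on ℝ × ℝ³, componentwise -/
def pdtV (F : P4 → V3) (p : P4) : V3 := fun i => pdt (fun q => F q i) p

def pdtC (f : P4 → ℂ) (p : P4) : ℂ := fderiv ℝ f p (1, 0)


lemma polar_pdC (r θ : V3 → ℝ) (hr : ContDiff ℝ (⊤ : ℕ∞) r) (hθ : ContDiff ℝ (⊤ : ℕ∞) θ)
    (f : V3 → ℂ) (hf : ∀ y, f y = (r y : ℂ) * Complex.exp (Complex.I * (θ y : ℂ)))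
    (x : V3) (i : Fin 3) :
    pdC i f x = Complex.exp (Complex.I * (θ x : ℂ)) *
      ((pd i r x : ℂ) + Complex.I * ((r x : ℂ) * (pd i θ x : ℂ))) := by
  have hfe : f = fun y => (r y : ℂ) * Complex.exp (Complex.I * (θ y : ℂ)) := funext hf
  subst hfe
  have hrd : HasFDerivAt r (fderiv ℝ r x) x := (hr.differentiable (by simp) x).hasFDerivAt
  have hθd : HasFDerivAt θ (fderiv ℝ θ x) x := (hθ.differentiable (by simp) x).hasFDerivAt
  have h2 : HasFDerivAt (fun y => ((θ y : ℂ)))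
      (Complex.ofRealCLM.comp (fderiv ℝ θ x)) x :=
    Complex.ofRealCLM.hasFDerivAt.comp x hθd
  have h3 : HasFDerivAt (fun y => Complex.I * (θ y : ℂ))
      (Complex.I • (Complex.ofRealCLM.comp (fderiv ℝ θ x))) x := h2.const_mul Complex.I
  have h4 := h3.cexp
  have h5 : HasFDerivAt (fun y => ((r y : ℂ)))
      (Complex.ofRealCLM.comp (fderiv ℝ r x)) x :=
    Complex.ofRealCLM.hasFDerivAt.comp x hrd
  have h6 : HasFDerivAt (fun y => (r y : ℂ) * Complex.exp (Complex.I * (θ y : ℂ))) _ x := h5.mul h4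
  rw [pdC, h6.fderiv]
  simp [pd, smul_eq_mul]
  ring

lemma pd_re (g : V3 → ℂ) (x : V3) (hg : DifferentiableAt ℝ g x) (i : Fin 3) :
    pd i (fun y => (g y).re) x = (pdC i g x).re := by
  have h : HasFDerivAt (fun y => (g y).re) (Complex.reCLM.comp (fderiv ℝ g x)) x :=
    Complex.reCLM.hasFDerivAt.comp x hg.hasFDerivAt
  simp [pd, pdC, h.fderiv]

lemma pd_im (g : V3 → ℂ) (x : V3) (hg : DifferentiableAt ℝ g x) (i : Fin 3) :
    pd i (fun y => (g y).im) x = (pdC i g x).im := by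
  have h : HasFDerivAt (fun y => (g y).im) (Complex.imCLM.comp (fderiv ℝ g x)) x :=
    Complex.imCLM.hasFDerivAt.comp x hg.hasFDerivAt
  simp [pd, pdC, h.fderiv]

lemma pdC_mul (f g : V3 → ℂ) (x : V3) (hf : DifferentiableAt ℝ f x)
    (hg : DifferentiableAt ℝ g x) (i : Fin 3) :
    pdC i (fun y => f y * g y) x = f x * pdC i g x + g x * pdC i f x := by
  have h : HasFDerivAt (fun y => f y * g y) _ x := hf.hasFDerivAt.mul hg.hasFDerivAt
  rw [pdC, h.fderiv]
  simp [pdC, smul_eq_mul]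

/-- with parallel phase surfaces, Re{αβ} is a first integral of
the electric field lines and Im{αβ} of the magnetic ones. -/
theorem stmt18 (α β : V3 → ℂ) (rα rβ θα θβ : V3 → ℝ)
    (hα : ContDiff ℝ (⊤ : ℕ∞) α) (hβ : ContDiff ℝ (⊤ : ℕ∞) β)
    (hrα : ContDiff ℝ (⊤ : ℕ∞) rα) (hrβ : ContDiff ℝ (⊤ : ℕ∞) rβ)
    (hθα : ContDiff ℝ (⊤ : ℕ∞) θα) (hθβ : ContDiff ℝ (⊤ : ℕ∞) θβ)
    (hrαpos : ∀ x, 0 < rα x) (hrβpos : ∀ x, 0 < rβ x)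
    (hpolα : ∀ x, α x = (rα x : ℂ) * Complex.exp (Complex.I * (θα x : ℂ)))
    (hpolβ : ∀ x, β x = (rβ x : ℂ) * Complex.exp (Complex.I * (θβ x : ℂ)))
    (E B : V3 → V3)
    (hEdef : ∀ x i, E x i = (ccross3 (gradC α x) (gradC β x) i).re)
    (hBdef : ∀ x i, B x i = (ccross3 (gradC α x) (gradC β x) i).im)
    (hpar : ∀ x, cross3 (grad3 θα x) (grad3 θβ x) = 0) :
    ∀ x : V3,
      dot3 (E x) (grad3 (fun y => (α y * β y).re) x) = 0 ∧
      dot3 (B x) (grad3 (fun y => (α y * β y).im) x) = 0 := by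
  intro x
  have hαd : DifferentiableAt ℝ α x := (hα.differentiable (by simp)).differentiableAt
  have hβd : DifferentiableAt ℝ β x := (hβ.differentiable (by simp)).differentiableAt
  have hA : ∀ i, pdC i α x = Complex.exp (Complex.I * (θα x : ℂ)) *
      ((pd i rα x : ℂ) + Complex.I * ((rα x : ℂ) * (pd i θα x : ℂ))) :=
    polar_pdC rα θα hrα hθα α hpolα x
  have hBp : ∀ i, pdC i β x = Complex.exp (Complex.I * (θβ x : ℂ)) *
      ((pd i rβ x : ℂ) + Complex.I * ((rβ x : ℂ) * (pd i θβ x : ℂ))) :=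
    polar_pdC rβ θβ hrβ hθβ β hpolβ x
  have hre : ∀ i, pd i (fun y => (α y * β y).re) x =
      (((rα x : ℂ) * Complex.exp (Complex.I * (θα x : ℂ))) *
        (Complex.exp (Complex.I * (θβ x : ℂ)) *
          ((pd i rβ x : ℂ) + Complex.I * ((rβ x : ℂ) * (pd i θβ x : ℂ)))) +
       ((rβ x : ℂ) * Complex.exp (Complex.I * (θβ x : ℂ))) *
        (Complex.exp (Complex.I * (θα x : ℂ)) *
          ((pd i rα x : ℂ) + Complex.I * ((rα x : ℂ) * (pd i θα x : ℂ))))).re := by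
    intro i
    rw [pd_re (fun y => α y * β y) x (hαd.mul hβd) i, pdC_mul α β x hαd hβd i, hA i, hBp i, hpolα x, hpolβ x]
  have him : ∀ i, pd i (fun y => (α y * β y).im) x =
      (((rα x : ℂ) * Complex.exp (Complex.I * (θα x : ℂ))) *
        (Complex.exp (Complex.I * (θβ x : ℂ)) *
          ((pd i rβ x : ℂ) + Complex.I * ((rβ x : ℂ) * (pd i θβ x : ℂ)))) +
       ((rβ x : ℂ) * Complex.exp (Complex.I * (θβ x : ℂ))) *
        (Complex.exp (Complex.I * (θα x : ℂ)) *
          ((pd i rα x : ℂ) + Complex.I * ((rα x : ℂ) * (pd i θα x : ℂ))))).im := by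
    intro i
    rw [pd_im (fun y => α y * β y) x (hαd.mul hβd) i, pdC_mul α β x hαd hβd i, hA i, hBp i, hpolα x, hpolβ x]
  have h0 : pd 1 θα x * pd 2 θβ x - pd 2 θα x * pd 1 θβ x = 0 := by
    simpa [cross3, grad3] using congr_fun (hpar x) 0
  have h1 : pd 2 θα x * pd 0 θβ x - pd 0 θα x * pd 2 θβ x = 0 := by
    simpa [cross3, grad3] using congr_fun (hpar x) 1
  have h2 : pd 0 θα x * pd 1 θβ x - pd 1 θα x * pd 0 θβ x = 0 := by
    simpa [cross3, grad3] using congr_fun (hpar x) 2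
  constructor
  · simp only [dot3, grad3]
    rw [hEdef x 0, hEdef x 1, hEdef x 2, hre 0, hre 1, hre 2]
    simp only [ccross3, gradC, Matrix.cons_val_zero, Matrix.cons_val_one, Matrix.head_cons,
      Matrix.cons_val_two, Matrix.tail_cons]
    rw [hA 0, hA 1, hA 2, hBp 0, hBp 1, hBp 2]
    simp only [Complex.add_re, Complex.sub_re, Complex.mul_re, Complex.mul_im, Complex.add_im,
      Complex.sub_im, Complex.I_re, Complex.I_im, Complex.ofReal_re, Complex.ofReal_im]
    linear_combination
      (-(((Complex.exp (Complex.I * (θα x : ℂ))).re ^ 2 + (Complex.exp (Complex.I * (θα x : ℂ))).im ^ 2) *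
         ((Complex.exp (Complex.I * (θβ x : ℂ))).re ^ 2 + (Complex.exp (Complex.I * (θβ x : ℂ))).im ^ 2)) *
        rα x * rβ x * (rβ x * pd 0 rα x + rα x * pd 0 rβ x)) * h0 +
      (-(((Complex.exp (Complex.I * (θα x : ℂ))).re ^ 2 + (Complex.exp (Complex.I * (θα x : ℂ))).im ^ 2) *
         ((Complex.exp (Complex.I * (θβ x : ℂ))).re ^ 2 + (Complex.exp (Complex.I * (θβ x : ℂ))).im ^ 2)) *
        rα x * rβ x * (rβ x * pd 1 rα x + rα x * pd 1 rβ x)) * h1 +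
      (-(((Complex.exp (Complex.I * (θα x : ℂ))).re ^ 2 + (Complex.exp (Complex.I * (θα x : ℂ))).im ^ 2) *
         ((Complex.exp (Complex.I * (θβ x : ℂ))).re ^ 2 + (Complex.exp (Complex.I * (θβ x : ℂ))).im ^ 2)) *
        rα x * rβ x * (rβ x * pd 2 rα x + rα x * pd 2 rβ x)) * h2
  · simp only [dot3, grad3]
    rw [hBdef x 0, hBdef x 1, hBdef x 2, him 0, him 1, him 2]
    simp only [ccross3, gradC, Matrix.cons_val_zero, Matrix.cons_val_one, Matrix.head_cons,
      Matrix.cons_val_two, Matrix.tail_cons]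
    rw [hA 0, hA 1, hA 2, hBp 0, hBp 1, hBp 2]
    simp only [Complex.add_re, Complex.sub_re, Complex.mul_re, Complex.mul_im, Complex.add_im,
      Complex.sub_im, Complex.I_re, Complex.I_im, Complex.ofReal_re, Complex.ofReal_im]
    linear_combination
      (-(((Complex.exp (Complex.I * (θα x : ℂ))).re ^ 2 + (Complex.exp (Complex.I * (θα x : ℂ))).im ^ 2) *
         ((Complex.exp (Complex.I * (θβ x : ℂ))).re ^ 2 + (Complex.exp (Complex.I * (θβ x : ℂ))).im ^ 2)) *
        rα x * rβ x * (rβ x * pd 0 rα x + rα x * pd 0 rβ x)) * h0 +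
      (-(((Complex.exp (Complex.I * (θα x : ℂ))).re ^ 2 + (Complex.exp (Complex.I * (θα x : ℂ))).im ^ 2) *
         ((Complex.exp (Complex.I * (θβ x : ℂ))).re ^ 2 + (Complex.exp (Complex.I * (θβ x : ℂ))).im ^ 2)) *
        rα x * rβ x * (rβ x * pd 1 rα x + rα x * pd 1 rβ x)) * h1 +
      (-(((Complex.exp (Complex.I * (θα x : ℂ))).re ^ 2 + (Complex.exp (Complex.I * (θα x : ℂ))).im ^ 2) *
         ((Complex.exp (Complex.I * (θβ x : ℂ))).re ^ 2 + (Complex.exp (Complex.I * (θβ x : ℂ))).im ^ 2)) *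
        rα x * rβ x * (rβ x * pd 2 rα x + rα x * pd 2 rβ x)) * h2
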